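/- Every self-similar ultrametric Cantor set admits a bi-Hölder embedding into the real line: there exist s > 0, an injective continuous map φ : C → ℝ, and constants 0 < c₋ ≤ c₊ such that c₋·ρ(x,y)^s ≤ |φ(x) − φ(y)| ≤ c₊·ρ(x,y)^s for all x, y. -/

import Mathlib

/-!
Enumerate the edges as digits `0, …, N - 1` and send a path `x` to `∑ⱼ x_j rʲ` with `r = αˢ`.
If `(2N + 1) r ≤ 1`, the first digit where two paths differ dominates the rest of the series,
so `|φ x - φ y|` is comparable to `r ^ |x ∧ y|`. Since `ρ(x, y) ^ s = a_{x∧y} ^ s · r ^ |x ∧ y|`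
with `a` bounded away from `0` and `∞`, this is comparable to `ρ(x, y) ^ s`.
-/

/-- The space of infinite paths of a stationary Bratteli diagram with edge set `Ed`,
vertex set `V`, and source/range maps `σ, τ : Ed → V`: sequences of composable edges. -/
def SPath (Ed : Type) {V : Type} (σ τ : Ed → V) : Type :=
  {x : ℕ → Ed // ∀ n, τ (x n) = σ (x (n + 1))}

/-- The length of the longest common prefix of two infinite paths. -/
noncomputable def slcp {Ed V : Type} {σ τ : Ed → V} (x y : SPath Ed σ τ) : ℕ :=
  sInf {n | x.1 n ≠ y.1 n}

open Filter Topology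

section BiHolder

variable {X Y : Type*}

def BiHolderWith [PseudoMetricSpace X] [PseudoMetricSpace Y] (cm cp t : ℝ) (φ : X → Y) : Prop :=
  ∀ x y, cm * dist x y ^ t ≤ dist (φ x) (φ y) ∧ dist (φ x) (φ y) ≤ cp * dist x y ^ t

namespace BiHolderWith

theorem continuous [PseudoMetricSpace X] [PseudoMetricSpace Y] {cm cp t : ℝ} {φ : X → Y}
    (hφ : BiHolderWith cm cp t φ) (ht : 0 < t) : Continuous φ := by
  refine continuous_iff_continuousAt.2 fun x => tendsto_iff_dist_tendsto_zero.2 ?_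
  have hlim : Tendsto (fun y => cp * dist y x ^ t) (𝓝 x) (𝓝 0) := by
    have := (((continuous_id.dist (continuous_const (y := x))).rpow_const
      fun _ => Or.inr ht.le).const_mul cp).tendsto x
    simpa [Real.zero_rpow ht.ne'] using this
  exact squeeze_zero (fun _ => dist_nonneg) (fun y => (hφ y x).2) hlim

theorem injective [MetricSpace X] [MetricSpace Y] {cm cp t : ℝ} {φ : X → Y}
    (hφ : BiHolderWith cm cp t φ) (hcm : 0 < cm) : Function.Injective φ := by
  intro x y hxy
  by_contra hne
  have := (hφ x y).1
  rw [hxy, dist_self] at this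
  exact this.not_gt (mul_pos hcm (Real.rpow_pos_of_pos (dist_pos.2 hne) t))

theorem of_comparable_scale [PseudoMetricSpace X] [PseudoMetricSpace Y] {φ : X → Y}
    {t k₁ k₂ l₁ l₂ : ℝ} (u : X → X → ℝ) (ht : t ≠ 0) (hk₁ : 0 < k₁) (hk₂ : 0 < k₂)
    (hl₁ : 0 ≤ l₁) (hl₂ : 0 ≤ l₂)
    (hdist : ∀ x y, x ≠ y → k₁ * u x y ≤ dist x y ^ t ∧ dist x y ^ t ≤ k₂ * u x y)
    (hφ : ∀ x y, x ≠ y → l₁ * u x y ≤ dist (φ x) (φ y) ∧ dist (φ x) (φ y) ≤ l₂ * u x y) :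
    BiHolderWith (l₁ / k₂) (l₂ / k₁) t φ := by
  intro x y
  rcases eq_or_ne x y with rfl | hxy
  · simp [Real.zero_rpow ht]
  obtain ⟨hd₁, hd₂⟩ := hdist x y hxy
  obtain ⟨hφ₁, hφ₂⟩ := hφ x y hxy
  constructor
  · calc l₁ / k₂ * dist x y ^ t ≤ l₁ / k₂ * (k₂ * u x y) := by gcongr
      _ = l₁ * u x y := by field_simp
      _ ≤ dist (φ x) (φ y) := hφ₁
  · calc dist (φ x) (φ y) ≤ l₂ * u x y := hφ₂
      _ = l₂ / k₁ * (k₁ * u x y) := by field_simp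
      _ ≤ l₂ / k₁ * dist x y ^ t := by gcongr

end BiHolderWith

end BiHolder

section PowerSeries

variable {c : ℕ → ℝ} {B r : ℝ} {n : ℕ}

theorem summable_mul_pow_of_abs_le (hc : ∀ j, |c j| ≤ B) (hr₀ : 0 ≤ r) (hr₁ : r < 1) :
    Summable fun j => c j * r ^ j :=
  .of_norm_bounded ((summable_geometric_of_lt_one hr₀ hr₁).mul_left B) fun j => by
    rw [norm_mul, norm_pow, Real.norm_eq_abs, Real.norm_eq_abs, abs_of_nonneg hr₀]
    exact mul_le_mul_of_nonneg_right (hc j) (pow_nonneg hr₀ j)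

theorem abs_tsum_mul_pow_sub_le (hc : ∀ j, |c j| ≤ B) (hzero : ∀ j < n, c j = 0)
    (hr₀ : 0 ≤ r) (hr₁ : r < 1) :
    |∑' j, c j * r ^ j - c n * r ^ n| ≤ B * r ^ (n + 1) / (1 - r) := by
  have htail : ∑' j, c j * r ^ j - c n * r ^ n = ∑' k, c (k + (n + 1)) * r ^ (k + (n + 1)) := by
    rw [← (summable_mul_pow_of_abs_le hc hr₀ hr₁).sum_add_tsum_nat_add (n + 1),
      Finset.sum_range_succ, Finset.sum_eq_zero fun j hj => by
        rw [hzero j (Finset.mem_range.1 hj), zero_mul]]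
    ring
  rw [htail, ← Real.norm_eq_abs, div_eq_mul_inv]
  refine tsum_of_norm_bounded ((hasSum_geometric_of_lt_one hr₀ hr₁).mul_left _) fun k => ?_
  rw [norm_mul, norm_pow, Real.norm_eq_abs, Real.norm_eq_abs, abs_of_nonneg hr₀, pow_add,
    mul_comm (r ^ k), ← mul_assoc]
  exact mul_le_mul_of_nonneg_right (mul_le_mul_of_nonneg_right (hc _) (by positivity))
    (by positivity)

theorem abs_tsum_mul_pow_bounds (hc : ∀ j, |c j| ≤ B) (hzero : ∀ j < n, c j = 0)
    (hlead : 1 ≤ |c n|) (hr₀ : 0 ≤ r) (hr₁ : r < 1) (hr : (2 * B + 1) * r ≤ 1) :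
    1 / 2 * r ^ n ≤ |∑' j, c j * r ^ j| ∧ |∑' j, c j * r ^ j| ≤ (B + 1) * r ^ n := by
  have htail := abs_tsum_mul_pow_sub_le hc hzero hr₀ hr₁
  have hrn : 0 ≤ r ^ n := pow_nonneg hr₀ n
  have hsmall : B * r ^ (n + 1) / (1 - r) ≤ 1 / 2 * r ^ n := by
    rw [div_le_iff₀ (by linarith), pow_succ]
    nlinarith
  have hcn : |c n| ≤ B := hc n
  have h₁ := abs_sub_abs_le_abs_sub (∑' j, c j * r ^ j) (c n * r ^ n)
  have h₂ := abs_sub_abs_le_abs_sub (c n * r ^ n) (∑' j, c j * r ^ j)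
  rw [abs_mul, abs_of_nonneg hrn] at h₁ h₂
  rw [abs_sub_comm] at h₂
  constructor <;> nlinarith

end PowerSeries

section Digits

variable {E : Type*} [Fintype E]

noncomputable def digit (v : E) : ℝ := Fintype.equivFin E v

noncomputable def digitExpansion (r : ℝ) (x : ℕ → E) : ℝ :=
  ∑' j, digit (x j) * r ^ j

theorem digit_nonneg (v : E) : 0 ≤ digit v := Nat.cast_nonneg _

theorem digit_lt_card (v : E) : digit v < Fintype.card E := by
  unfold digit
  exact_mod_cast (Fintype.equivFin E v).2

theorem abs_digit_le (v : E) : |digit v| ≤ Fintype.card E := by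
  rw [abs_of_nonneg (digit_nonneg v)]
  exact (digit_lt_card v).le

theorem abs_digit_sub_digit_le (v w : E) : |digit v - digit w| ≤ Fintype.card E :=
  (abs_sub_lt_of_nonneg_of_lt (digit_nonneg v) (digit_lt_card v) (digit_nonneg w)
    (digit_lt_card w)).le

theorem one_le_abs_digit_sub_digit {v w : E} (h : v ≠ w) : 1 ≤ |digit v - digit w| := by
  have hne : ((Fintype.equivFin E v : ℕ) : ℤ) - (Fintype.equivFin E w : ℕ) ≠ 0 := by
    rw [sub_ne_zero, Ne, Nat.cast_inj, Fin.val_inj, EmbeddingLike.apply_eq_iff_eq]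
    exact h
  unfold digit
  exact_mod_cast Int.one_le_abs hne

theorem abs_digitExpansion_sub_bounds {x y : ℕ → E} {r : ℝ} {n : ℕ}
    (heq : ∀ j < n, x j = y j) (hne : x n ≠ y n) (hr₀ : 0 ≤ r) (hr₁ : r < 1)
    (hr : (2 * Fintype.card E + 1) * r ≤ 1) :
    1 / 2 * r ^ n ≤ |digitExpansion r x - digitExpansion r y| ∧
      |digitExpansion r x - digitExpansion r y| ≤ (Fintype.card E + 1) * r ^ n := by
  have hsub : digitExpansion r x - digitExpansion r y =
      ∑' j, (digit (x j) - digit (y j)) * r ^ j := by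
    simp only [digitExpansion, sub_mul]
    exact ((summable_mul_pow_of_abs_le (fun j => abs_digit_le (x j)) hr₀ hr₁).tsum_sub
      (summable_mul_pow_of_abs_le (fun j => abs_digit_le (y j)) hr₀ hr₁)).symm
  rw [hsub]
  exact abs_tsum_mul_pow_bounds (fun j => abs_digit_sub_digit_le _ _)
    (fun j hj => by rw [heq j hj, sub_self]) (one_le_abs_digit_sub_digit hne) hr₀ hr₁ hr

end Digits

section Paths

variable {V Ed : Type} {σ τ : Ed → V} {x y : SPath Ed σ τ}

theorem apply_slcp_ne (h : x ≠ y) : x.1 (slcp x y) ≠ y.1 (slcp x y) := by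
  have hdiff : ∃ n, x.1 n ≠ y.1 n := by
    by_contra! hall
    exact h (Subtype.ext (funext hall))
  exact Nat.sInf_mem hdiff

theorem apply_eq_of_lt_slcp {i : ℕ} (hi : i < slcp x y) : x.1 i = y.1 i :=
  not_not.1 (Nat.notMem_of_lt_sInf hi)

end Paths

theorem mul_pow_rpow_natCast_bounds {a a₁ A α : ℝ} (h₁ : a₁ ≤ a) (h₂ : a ≤ A) (ha₁ : 0 ≤ a₁)
    (hα : 0 ≤ α) (s n : ℕ) :
    a₁ ^ s * (α ^ s) ^ n ≤ (a * α ^ n) ^ (s : ℝ) ∧ (a * α ^ n) ^ (s : ℝ) ≤ A ^ s * (α ^ s) ^ n := by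
  rw [Real.rpow_natCast, mul_pow, ← pow_mul, ← pow_mul, mul_comm n s]
  exact ⟨by gcongr, by gcongr; linarith⟩

theorem exists_pos_mul_pow_le_one {α : ℝ} (hα₀ : 0 ≤ α) (hα₁ : α < 1) (C : ℝ) :
    ∃ s : ℕ, 0 < s ∧ C * α ^ s ≤ 1 := by
  have hlim : Tendsto (fun s : ℕ => C * α ^ s) atTop (𝓝 0) := by
    simpa using (tendsto_pow_atTop_nhds_zero_of_lt_one hα₀ hα₁).const_mul C
  exact ((eventually_gt_atTop 0).and (hlim.eventually (eventually_le_nhds one_pos))).exists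

theorem stmt14_general {V Ed : Type} [Fintype Ed] (σ τ : Ed → V)
    (α : ℝ) (hα : α ∈ Set.Ioo (0 : ℝ) 1)
    (a : SPath Ed σ τ → ℕ → ℝ) (a₁ a₂ : ℝ) (ha₁ : 0 < a₁)
    (hab : ∀ x n, a x n ∈ Set.Icc a₁ a₂)
    [MetricSpace (SPath Ed σ τ)]
    (hdist : ∀ x y : SPath Ed σ τ, x ≠ y → dist x y = a x (slcp x y) * α ^ slcp x y) :
    ∃ t : ℝ, 0 < t ∧ ∃ φ : SPath Ed σ τ → ℝ, Continuous φ ∧ Function.Injective φ ∧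
      ∃ cm cp : ℝ, 0 < cm ∧ cm ≤ cp ∧
        ∀ x y : SPath Ed σ τ,
          cm * dist x y ^ t ≤ |φ x - φ y| ∧ |φ x - φ y| ≤ cp * dist x y ^ t := by
  obtain ⟨hα₀, hα₁⟩ := hα
  obtain ⟨s, hs, hr⟩ := exists_pos_mul_pow_le_one hα₀.le hα₁ (2 * Fintype.card Ed + 1)
  -- `a₂` itself need not be positive when the path space is empty.
  have hA : 0 < max a₁ a₂ := ha₁.trans_le (le_max_left _ _)
  have hφ := BiHolderWith.of_comparable_scale (t := s) (l₁ := 1 / 2) (l₂ := Fintype.card Ed + 1)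
    (φ := fun x : SPath Ed σ τ => digitExpansion (α ^ s) x.1) (fun x y => (α ^ s) ^ slcp x y)
    (by positivity) (pow_pos ha₁ s) (pow_pos hA s) (by norm_num) (by positivity)
    (fun x y hxy => by
      rw [hdist x y hxy]
      exact mul_pow_rpow_natCast_bounds (hab x _).1 ((hab x _).2.trans (le_max_right _ _))
        ha₁.le hα₀.le s _)
    (fun x y hxy => by
      rw [Real.dist_eq]
      exact abs_digitExpansion_sub_bounds (fun j => apply_eq_of_lt_slcp) (apply_slcp_ne hxy)
        (by positivity) (pow_lt_one₀ hα₀.le hα₁ hs.ne') hr)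
  refine ⟨s, by positivity, _, hφ.continuous (by positivity), hφ.injective (by positivity),
    1 / 2 / max a₁ a₂ ^ s, (Fintype.card Ed + 1) / a₁ ^ s, by positivity, ?_,
    fun x y => by simpa only [Real.dist_eq] using hφ x y⟩
  gcongr
  · linarith [(Nat.cast_nonneg (Fintype.card Ed) : (0 : ℝ) ≤ _)]
  · exact le_max_left _ _

/-- Every self-similar ultrametric Cantor set (the path space of a stationary Bratteli
diagram with ultrametric `ρ(x,y) = a_{x∧y}·α^{|x∧y|}`, weights uniformly bounded away from
`0` and `∞`) admits a bi-Hölder embedding into the real line: there are `t > 0`, an injective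
continuous `φ : C → ℝ` and `0 < c₋ ≤ c₊` with
`c₋·ρ(x,y)^t ≤ |φ(x) − φ(y)| ≤ c₊·ρ(x,y)^t`. -/
theorem stmt14 {V Ed : Type} [Fintype Ed] [Nonempty Ed] (σ τ : Ed → V)
    (α : ℝ) (hα : α ∈ Set.Ioo (0 : ℝ) 1)
    (a : SPath Ed σ τ → ℕ → ℝ) (a₁ a₂ : ℝ) (ha₁ : 0 < a₁)
    (hab : ∀ x n, a x n ∈ Set.Icc a₁ a₂)
    (hagree : ∀ x y : SPath Ed σ τ, ∀ n, (∀ i < n, x.1 i = y.1 i) → a x n = a y n)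
    [MetricSpace (SPath Ed σ τ)]
    (hdist : ∀ x y : SPath Ed σ τ, x ≠ y → dist x y = a x (slcp x y) * α ^ slcp x y) :
    ∃ t : ℝ, 0 < t ∧ ∃ φ : SPath Ed σ τ → ℝ, Continuous φ ∧ Function.Injective φ ∧
      ∃ cm cp : ℝ, 0 < cm ∧ cm ≤ cp ∧
        ∀ x y : SPath Ed σ τ,
          cm * dist x y ^ t ≤ |φ x - φ y| ∧ |φ x - φ y| ≤ cp * dist x y ^ t :=
  stmt14_general σ τ α hα a a₁ a₂ ha₁ hab hdist
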